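/- Let T : H → H be nonexpansive with at least one fixed point, let ε ∈ (0, 1), and let sequences (λ_n) and (ζ_n) satisfy ε ≤ λ_n ≤ 2 − ε/2 and 0 ≤ ζ_n ≤ 1 − ε for all n ≥ 0. Let (x_n), (v_n), (p_n) satisfy: v_0 = 0; z_n = x_n + v_n; p_n = (1/2)(z_n + T z_n); x_{n+1} = (1 − λ_n)x_n + λ_n(p_n − v_n); and ‖v_{n+1}‖² ≤ ζ_n·(λ_n(2 − λ_n)(2 − λ_{n+1})/λ_{n+1})·‖p_n − x_n + ((λ_n − 1)/(2 − λ_n))v_n‖² for all n ≥ 0. Then (x_n) converges weakly to a fixed point of T. -/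
import Mathlib

open Filter
open scoped RealInnerProductSpace Topology

section Helpers
variable {H : Type*} [NormedAddCommGroup H] [InnerProductSpace ℝ H]

lemma key_identity (a v q : H) (l : ℝ) (hl : 2 - l ≠ 0) :
    ‖(1-l)•a + l•(q-v)‖^2 + l*(2-l)*‖(q-a-v)+(2-l)⁻¹•v‖^2
    = ‖a‖^2 + (l/(2-l))*‖v‖^2 + l*(‖q‖^2+‖a+v-q‖^2-‖a+v‖^2) := by
  simp only [← real_inner_self_eq_norm_sq]
  simp only [inner_add_left, inner_add_right, inner_sub_left, inner_sub_right,
    real_inner_smul_left, real_inner_smul_right]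
  rw [real_inner_comm v a, real_inner_comm q a, real_inner_comm q v]
  field_simp
  ring

lemma par_half (c d : H) (h : ‖c‖ ≤ ‖d‖) :
    ‖(1/2:ℝ)•(d+c)‖^2 + ‖(1/2:ℝ)•(d-c)‖^2 ≤ ‖d‖^2 := by
  have h1 : ‖(1/2:ℝ)•(d+c)‖^2 = (1/4)*‖d+c‖^2 := by rw [norm_smul]; simp; ring
  have h2 : ‖(1/2:ℝ)•(d-c)‖^2 = (1/4)*‖d-c‖^2 := by rw [norm_smul]; simp; ring
  rw [h1, h2, norm_add_sq_real, norm_sub_sq_real]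
  nlinarith [norm_nonneg c, norm_nonneg d]

lemma firm_ineq (T : H → H) (hT : ∀ a b : H, ‖T a - T b‖ ≤ ‖a - b‖)
    (zz w : H) (hw : T w = w) :
    ‖(1/2:ℝ)•(zz+T zz) - w‖^2 + ‖zz - (1/2:ℝ)•(zz+T zz)‖^2 ≤ ‖zz - w‖^2 := by
  have h := hT zz w
  rw [hw] at h
  have hc : True := trivial
  set c := T zz - w with hcdef
  set d := zz - w with hddef
  have e1 : (1/2:ℝ)•(zz+T zz) - w = (1/2:ℝ)•(d+c) := by
    simp only [hcdef, hddef]; module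
  have e2 : zz - (1/2:ℝ)•(zz+T zz) = (1/2:ℝ)•(d-c) := by
    simp only [hcdef, hddef]; module
  rw [e1, e2]
  exact par_half c d h

variable [CompleteSpace H]

lemma weak_limit_along (x : ℕ → H) (R : ℝ) (hb : ∀ n, ‖x n‖ ≤ R) (U : Ultrafilter ℕ) :
    ∃ xb : H, ∀ w : H, Tendsto (fun n => ⟪x n, w⟫) ↑U (𝓝 ⟪xb, w⟫) := by
  have hex : ∀ w : H, ∃ c : ℝ, Tendsto (fun n => ⟪x n, w⟫) ↑U (𝓝 c) := by
    intro w
    have habs : ∀ n, |⟪x n, w⟫| ≤ R * ‖w‖ := by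
      intro n
      calc |⟪x n, w⟫| ≤ ‖x n‖ * ‖w‖ := abs_real_inner_le_norm _ _
        _ ≤ R * ‖w‖ := mul_le_mul_of_nonneg_right (hb n) (norm_nonneg w)
    have hmem : ∀ n, ⟪x n, w⟫ ∈ Set.Icc (-(R*‖w‖)) (R*‖w‖) := by
      intro n
      have := abs_le.mp (habs n); exact ⟨this.1, this.2⟩
    obtain ⟨c, _, hc⟩ := (isCompact_Icc (a := -(R*‖w‖)) (b := R*‖w‖)).ultrafilter_le_nhds
      (U.map fun n => ⟪x n, w⟫)
      (by rw [Ultrafilter.coe_map, le_principal_iff, mem_map]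
          exact univ_mem' hmem)
    exact ⟨c, by rwa [Ultrafilter.coe_map] at hc⟩
  choose f hf using hex
  have hadd : ∀ w1 w2 : H, f (w1 + w2) = f w1 + f w2 := by
    intro w1 w2
    refine tendsto_nhds_unique (hf (w1 + w2)) ?_
    have := (hf w1).add (hf w2)
    simpa [inner_add_right] using this
  have hsmul : ∀ (r : ℝ) (w : H), f (r • w) = r * f w := by
    intro r w
    refine tendsto_nhds_unique (hf (r • w)) ?_
    have := (hf w).const_mul r
    simpa [real_inner_smul_right, mul_comm] using this
  have hbdd : ∀ w, |f w| ≤ R * ‖w‖ := by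
    intro w
    have habs : ∀ n, |⟪x n, w⟫| ≤ R * ‖w‖ := by
      intro n
      calc |⟪x n, w⟫| ≤ ‖x n‖ * ‖w‖ := abs_real_inner_le_norm _ _
        _ ≤ R * ‖w‖ := mul_le_mul_of_nonneg_right (hb n) (norm_nonneg w)
    have h1 : Tendsto (fun n => |⟪x n, w⟫|) ↑U (𝓝 |f w|) := (hf w).abs
    exact le_of_tendsto h1 (Eventually.of_forall habs)
  let φ : H →L[ℝ] ℝ := LinearMap.mkContinuous
    { toFun := f, map_add' := hadd, map_smul' := hsmul } R
    (fun w => by simpa [Real.norm_eq_abs] using hbdd w)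
  refine ⟨(InnerProductSpace.toDual ℝ H).symm φ, fun w => ?_⟩
  have : ⟪(InnerProductSpace.toDual ℝ H).symm φ, w⟫ = φ w := by
    simp [InnerProductSpace.toDual_symm_apply]
  rw [this]
  exact hf w

end Helpers

set_option maxHeartbeats 2000000 in
/-- Krasnosel'skiĭ–Mann iteration with deviations converges weakly to a
fixed point of the nonexpansive operator `T`. -/
theorem km_with_deviations_weak_convergence
    {H : Type*} [NormedAddCommGroup H] [InnerProductSpace ℝ H] [CompleteSpace H]
    (T : H → H) (hT : ∀ a b : H, ‖T a - T b‖ ≤ ‖a - b‖)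
    (hfix : ∃ w : H, T w = w)
    (ε : ℝ) (hε0 : 0 < ε) (hε1 : ε < 1)
    (lam ζ : ℕ → ℝ)
    (hlam : ∀ n, ε ≤ lam n ∧ lam n ≤ 2 - ε / 2)
    (hζ : ∀ n, 0 ≤ ζ n ∧ ζ n ≤ 1 - ε)
    (x v p z : ℕ → H)
    (hv0 : v 0 = 0)
    (hz : ∀ n, z n = x n + v n)
    (hpn : ∀ n, p n = (1 / 2 : ℝ) • (z n + T (z n)))
    (hxn : ∀ n, x (n + 1) = (1 - lam n) • x n + lam n • (p n - v n))
    (hdev : ∀ n, ‖v (n + 1)‖ ^ 2 ≤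
      ζ n * (lam n * (2 - lam n) * (2 - lam (n + 1)) / lam (n + 1)) *
        ‖p n - x n + ((lam n - 1) / (2 - lam n)) • v n‖ ^ 2) :
    ∃ xb : H, T xb = xb ∧
      ∀ w : H, Tendsto (fun n => ⟪x n, w⟫) atTop (𝓝 ⟪xb, w⟫) := by
  obtain ⟨w0, hw0⟩ := hfix
  have hl0 : ∀ n, 0 < lam n := fun n => lt_of_lt_of_le hε0 (hlam n).1
  have hl2 : ∀ n, 0 < 2 - lam n := fun n => by have := (hlam n).2; linarith
  set u : ℕ → H := fun n => p n - z n with hu_def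
  set M : ℕ → ℝ := fun n => lam n * (2 - lam n) * ‖u n + (2 - lam n)⁻¹ • v n‖^2 with hM_def
  have hM0 : ∀ n, 0 ≤ M n := by
    intro n
    have h1 := (hl0 n).le; have h2 := (hl2 n).le
    positivity
  -- rewrite the deviation bound
  have hbr_eq : ∀ n, p n - x n + ((lam n - 1) / (2 - lam n)) • v n
      = u n + (2 - lam n)⁻¹ • v n := by
    intro n
    have hne : (2 - lam n) ≠ 0 := (hl2 n).ne'
    have hco : (lam n - 1) / (2 - lam n) = (2 - lam n)⁻¹ - 1 := by
      field_simp; ring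
    rw [hco]
    show p n - x n + ((2 - lam n)⁻¹ - 1) • v n = (p n - z n) + (2 - lam n)⁻¹ • v n
    rw [hz n]
    module
  have hdev' : ∀ n, (lam (n+1)/(2 - lam (n+1))) * ‖v (n+1)‖^2 ≤ ζ n * M n := by
    intro n
    have h := hdev n
    rw [hbr_eq n] at h
    have hle := mul_le_mul_of_nonneg_left h
      (le_of_lt (div_pos (hl0 (n+1)) (hl2 (n+1))))
    calc (lam (n+1)/(2 - lam (n+1))) * ‖v (n+1)‖^2 ≤
        (lam (n+1)/(2 - lam (n+1))) * (ζ n * (lam n * (2 - lam n) * (2 - lam (n+1)) / lam (n+1)) *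
          ‖u n + (2 - lam n)⁻¹ • v n‖ ^ 2) := hle
      _ = ζ n * M n := by
          have h1 : lam (n+1) ≠ 0 := (hl0 (n+1)).ne'
          have h2 : (2 : ℝ) - lam (n+1) ≠ 0 := (hl2 (n+1)).ne'
          show _ = ζ n * (lam n * (2 - lam n) * ‖u n + (2 - lam n)⁻¹ • v n‖^2)
          field_simp
  -- key one-step estimate for any fixed point
  have key : ∀ wz, T wz = wz → ∀ n, ‖x (n+1) - wz‖^2 ≤
      ‖x n - wz‖^2 - M n + (lam n/(2-lam n)) * ‖v n‖^2 := by
    intro wz hwz n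
    have hne : (2 - lam n) ≠ 0 := (hl2 n).ne'
    have step1 : x (n+1) - wz = (1 - lam n)•(x n - wz) + lam n•((p n - wz) - v n) := by
      rw [hxn n]; module
    have hfirm := firm_ineq T hT (z n) wz hwz
    rw [← hpn n] at hfirm
    have hDelta : ‖p n - wz‖^2 + ‖(x n - wz) + v n - (p n - wz)‖^2
        - ‖(x n - wz) + v n‖^2 ≤ 0 := by
      have e1 : (x n - wz) + v n - (p n - wz) = z n - p n := by rw [hz n]; abel
      have e2 : (x n - wz) + v n = z n - wz := by rw [hz n]; abel
      rw [e1, e2]; linarith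
    have hid := key_identity (x n - wz) (v n) (p n - wz) (lam n) hne
    have e3 : (p n - wz) - (x n - wz) - v n = u n := by
      show _ = p n - z n
      rw [hz n]; abel
    rw [e3] at hid
    rw [step1]
    have hMn : M n = lam n * (2 - lam n) * ‖u n + (2 - lam n)⁻¹ • v n‖^2 := rfl
    nlinarith [hid, hDelta, (hl0 n), mul_le_mul_of_nonneg_left hDelta (hl0 n).le]
  -- Lyapunov decrease
  have lyap : ∀ wz, T wz = wz → ∀ n,
      ‖x (n+1) - wz‖^2 + (lam (n+1)/(2-lam (n+1))) * ‖v (n+1)‖^2 ≤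
      ‖x n - wz‖^2 + (lam n/(2-lam n)) * ‖v n‖^2 - ε * M n := by
    intro wz hwz n
    have h1 := key wz hwz n
    have h2 := hdev' n
    have h3 : ζ n * M n ≤ (1 - ε) * M n :=
      mul_le_mul_of_nonneg_right (hζ n).2 (hM0 n)
    linarith
  -- generic Lyapunov facts for any fixed point
  have hVfacts : ∀ wz, T wz = wz →
      (Antitone (fun k => ‖x k - wz‖^2 + (lam k/(2-lam k)) * ‖v k‖^2)) ∧
      (∀ n, ε * ∑ k ∈ Finset.range n, M k ≤
        (‖x 0 - wz‖^2 + (lam 0/(2-lam 0)) * ‖v 0‖^2)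
          - (‖x n - wz‖^2 + (lam n/(2-lam n)) * ‖v n‖^2)) := by
    intro wz hwz
    set V : ℕ → ℝ := fun k => ‖x k - wz‖^2 + (lam k/(2-lam k)) * ‖v k‖^2 with hV_def
    have hstep := lyap wz hwz
    constructor
    · refine antitone_nat_of_succ_le fun n => ?_
      simp only [hV_def]
      have h1 := hstep n
      have h2 := hM0 n
      have h3 : 0 ≤ ε * M n := mul_nonneg hε0.le h2
      linarith
    · intro n
      induction n with
      | zero => simp
      | succ m ih =>
          rw [Finset.sum_range_succ]
          have h1 := hstep m
          linarith
  have hVnonneg : ∀ wz : H, ∀ k, 0 ≤ ‖x k - wz‖^2 + (lam k/(2-lam k)) * ‖v k‖^2 := by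
    intro wz k
    have h1 := (hl0 k).le
    have h2 := (hl2 k).le
    positivity
  -- summability of M
  have hMsum : Summable M := by
    apply summable_of_sum_range_le (c := (‖x 0 - w0‖^2 + (lam 0/(2-lam 0)) * ‖v 0‖^2)/ε) hM0
    intro n
    have h := (hVfacts w0 hw0).2 n
    have h2 := hVnonneg w0 n
    rw [le_div_iff₀ hε0, mul_comm]
    linarith
  have hM_to : Tendsto M atTop (𝓝 0) := hMsum.tendsto_atTop_zero
  -- v tends to zero
  have hv2' : Tendsto (fun n => ‖v (n+1)‖^2) atTop (𝓝 0) := by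
    have hbound : ∀ n, ‖v (n+1)‖^2 ≤ (2/ε) * M n := by
      intro n
      have h1 := hdev' n
      have h2 : ζ n * M n ≤ M n := by
        have := (hζ n).2
        nlinarith [hM0 n]
      have ha : ε/2 ≤ lam (n+1)/(2 - lam (n+1)) := by
        rw [le_div_iff₀ (hl2 (n+1))]
        have h3 := (hlam (n+1)).1
        have h4 := (hl2 (n+1))
        nlinarith
      have h5 : (ε/2) * ‖v (n+1)‖^2 ≤ (lam (n+1)/(2 - lam (n+1))) * ‖v (n+1)‖^2 :=
        mul_le_mul_of_nonneg_right ha (sq_nonneg _)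
      have h6 : (ε/2) * ‖v (n+1)‖^2 ≤ M n := by linarith
      rw [div_mul_eq_mul_div, le_div_iff₀ hε0]
      linarith
    have hg : Tendsto (fun n => (2/ε) * M n) atTop (𝓝 0) := by
      simpa using hM_to.const_mul (2/ε)
    exact squeeze_zero (fun n => sq_nonneg _) hbound hg
  have hv2 : Tendsto (fun n => ‖v n‖^2) atTop (𝓝 0) :=
    (tendsto_add_atTop_iff_nat 1).mp hv2'
  have hvn : Tendsto (fun n => ‖v n‖) atTop (𝓝 0) := by
    have h := hv2.sqrt
    rw [Real.sqrt_zero] at h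
    exact h.congr fun n => Real.sqrt_sq (norm_nonneg _)
  -- the bracket tends to zero
  have hbrn : Tendsto (fun n => ‖u n + (2-lam n)⁻¹ • v n‖) atTop (𝓝 0) := by
    have hbound : ∀ n, ‖u n + (2-lam n)⁻¹ • v n‖^2 ≤ (2/(ε*ε)) * M n := by
      intro n
      have h1 := (hlam n).1
      have h2 : ε/2 ≤ 2 - lam n := by have := (hlam n).2; linarith
      have h3 : (ε * (ε/2)) * ‖u n + (2-lam n)⁻¹ • v n‖^2 ≤ M n := by
        rw [hM_def]
        have : ε * (ε/2) ≤ lam n * (2 - lam n) := by nlinarith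
        exact mul_le_mul_of_nonneg_right this (sq_nonneg _)
      rw [div_mul_eq_mul_div, le_div_iff₀ (by positivity : (0:ℝ) < ε*ε)]
      nlinarith
    have hg : Tendsto (fun n => (2/(ε*ε)) * M n) atTop (𝓝 0) := by
      simpa using hM_to.const_mul (2/(ε*ε))
    have hsq := squeeze_zero (fun n => sq_nonneg _) hbound hg
    have h := hsq.sqrt
    rw [Real.sqrt_zero] at h
    exact h.congr fun n => Real.sqrt_sq (norm_nonneg _)
  -- u tends to zero
  have hun : Tendsto (fun n => ‖u n‖) atTop (𝓝 0) := by
    have hbound : ∀ n, ‖u n‖ ≤ ‖u n + (2-lam n)⁻¹ • v n‖ + (2/ε) * ‖v n‖ := by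
      intro n
      have h2 : ε/2 ≤ 2 - lam n := by have := (hlam n).2; linarith
      have e : u n = (u n + (2-lam n)⁻¹ • v n) - (2-lam n)⁻¹ • v n := by abel
      calc ‖u n‖ = ‖(u n + (2-lam n)⁻¹ • v n) - (2-lam n)⁻¹ • v n‖ := by rw [← e]
        _ ≤ ‖u n + (2-lam n)⁻¹ • v n‖ + ‖(2-lam n)⁻¹ • v n‖ := norm_sub_le _ _
        _ ≤ ‖u n + (2-lam n)⁻¹ • v n‖ + (2/ε) * ‖v n‖ := by
            have : ‖(2-lam n)⁻¹ • v n‖ = (2-lam n)⁻¹ * ‖v n‖ := by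
              rw [norm_smul, Real.norm_eq_abs, abs_of_pos (inv_pos.mpr (hl2 n))]
            rw [this]
            have hinv : (2-lam n)⁻¹ ≤ 2/ε := by
              have he2 : (0:ℝ) < ε/2 := by positivity
              have := one_div_le_one_div_of_le he2 h2
              rw [one_div, one_div, inv_div] at this
              simpa using this
            have := mul_le_mul_of_nonneg_right hinv (norm_nonneg (v n))
            linarith
    have hg : Tendsto (fun n => ‖u n + (2-lam n)⁻¹ • v n‖ + (2/ε) * ‖v n‖) atTop (𝓝 0) := by
      have := hbrn.add (hvn.const_mul (2/ε))
      simpa using this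
    exact squeeze_zero (fun n => norm_nonneg _) hbound hg
  -- T x n - x n tends to zero
  have hTxx : Tendsto (fun n => ‖T (x n) - x n‖) atTop (𝓝 0) := by
    have hTz : ∀ n, T (z n) - z n = (2:ℝ) • u n := by
      intro n
      show _ = (2:ℝ) • (p n - z n)
      rw [hpn n]; module
    have hbound : ∀ n, ‖T (x n) - x n‖ ≤ 2 * ‖v n‖ + 2 * ‖u n‖ := by
      intro n
      have e : T (x n) - x n = (T (x n) - T (z n)) + (T (z n) - z n) + (z n - x n) := by abel
      have h1 : ‖T (x n) - T (z n)‖ ≤ ‖v n‖ := by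
        have := hT (x n) (z n)
        have e2 : x n - z n = -(v n) := by rw [hz n]; abel
        rwa [e2, norm_neg] at this
      have h2 : ‖T (z n) - z n‖ = 2 * ‖u n‖ := by
        rw [hTz n, norm_smul]
        simp
      have h3 : ‖z n - x n‖ = ‖v n‖ := by
        have e3 : z n - x n = v n := by rw [hz n]; abel
        rw [e3]
      calc ‖T (x n) - x n‖ ≤ ‖T (x n) - T (z n)‖ + ‖T (z n) - z n‖ + ‖z n - x n‖ := by
            rw [e]; exact norm_add₃_le
        _ ≤ 2 * ‖v n‖ + 2 * ‖u n‖ := by rw [h2, h3]; linarith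
    have hg : Tendsto (fun n => 2 * ‖v n‖ + 2 * ‖u n‖) atTop (𝓝 0) := by
      have := (hvn.const_mul 2).add (hun.const_mul 2)
      simpa using this
    exact squeeze_zero (fun n => norm_nonneg _) hbound hg
  -- boundedness of x
  set R : ℝ := ‖w0‖ + Real.sqrt (‖x 0 - w0‖^2 + (lam 0/(2-lam 0)) * ‖v 0‖^2) with hR_def
  have hbnd : ∀ n, ‖x n‖ ≤ R := by
    intro n
    have hmono := (hVfacts w0 hw0).1 (Nat.zero_le n)
    have h2 := hVnonneg w0 n
    have hx2 : ‖x n - w0‖^2 ≤ ‖x 0 - w0‖^2 + (lam 0/(2-lam 0)) * ‖v 0‖^2 := by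
      have h3 : 0 ≤ (lam n/(2-lam n)) * ‖v n‖^2 := by
        have := (hl0 n).le; have := (hl2 n).le; positivity
      have h4 : (fun k => ‖x k - w0‖^2 + (lam k/(2-lam k)) * ‖v k‖^2) n ≤
          (fun k => ‖x k - w0‖^2 + (lam k/(2-lam k)) * ‖v k‖^2) 0 := hmono
      simp only [] at h4
      linarith
    have hsq : ‖x n - w0‖ ≤ Real.sqrt (‖x 0 - w0‖^2 + (lam 0/(2-lam 0)) * ‖v 0‖^2) := by
      rw [show ‖x n - w0‖ = Real.sqrt (‖x n - w0‖^2) from (Real.sqrt_sq (norm_nonneg _)).symm]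
      exact Real.sqrt_le_sqrt hx2
    calc ‖x n‖ = ‖(x n - w0) + w0‖ := by rw [sub_add_cancel]
      _ ≤ ‖x n - w0‖ + ‖w0‖ := norm_add_le _ _
      _ ≤ R := by rw [hR_def]; linarith
  -- limit of ‖x n - wz‖² for fixed points
  have hcv : Tendsto (fun n => (lam n/(2-lam n)) * ‖v n‖^2) atTop (𝓝 0) := by
    have hbound : ∀ n, (lam n/(2-lam n)) * ‖v n‖^2 ≤ (4/ε) * ‖v n‖^2 := by
      intro n
      have h2 : ε/2 ≤ 2 - lam n := by have := (hlam n).2; linarith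
      have hc : lam n/(2-lam n) ≤ 4/ε := by
        rw [div_le_div_iff₀ (hl2 n) hε0]
        have := (hlam n).2
        nlinarith
      exact mul_le_mul_of_nonneg_right hc (sq_nonneg _)
    have hg : Tendsto (fun n => (4/ε) * ‖v n‖^2) atTop (𝓝 0) := by
      simpa using hv2.const_mul (4/ε)
    refine squeeze_zero (fun n => ?_) hbound hg
    have := (hl0 n).le; have := (hl2 n).le; positivity
  have hL : ∀ wz, T wz = wz → ∃ L, Tendsto (fun n => ‖x n - wz‖^2) atTop (𝓝 L) := by
    intro wz hwz
    have hanti := (hVfacts wz hwz).1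
    have hbdd : BddBelow (Set.range fun k => ‖x k - wz‖^2 + (lam k/(2-lam k)) * ‖v k‖^2) := by
      refine ⟨0, fun y hy => ?_⟩
      obtain ⟨k, rfl⟩ := hy
      exact hVnonneg wz k
    have h1 := (tendsto_atTop_ciInf hanti hbdd).sub hcv
    rw [sub_zero] at h1
    exact ⟨_, h1.congr fun n => by ring⟩
  -- demiclosedness via ultrafilter limits
  have hdemi : ∀ (U : Ultrafilter ℕ), ↑U ≤ (atTop : Filter ℕ) → ∀ xb : H,
      (∀ w : H, Tendsto (fun n => ⟪x n, w⟫) ↑U (𝓝 ⟪xb, w⟫)) → T xb = xb := by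
    intro U hU xb hxb
    set c : H := xb - T xb with hc_def
    have keyd : ∀ n, ‖c‖^2 ≤ (‖T (x n) - x n‖^2 + 2*‖T (x n) - x n‖*(R + ‖xb‖))
        - 2*(⟪x n, c⟫ - ⟪xb, c⟫) := by
      intro n
      have e1 : x n - T xb = (x n - xb) + c := by rw [hc_def]; abel
      have h1 : ‖x n - T xb‖^2 = ‖x n - xb‖^2 + 2*⟪x n - xb, c⟫ + ‖c‖^2 := by
        rw [e1, norm_add_sq_real]
      have htri : ‖x n - T xb‖ ≤ ‖T (x n) - x n‖ + ‖x n - xb‖ := by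
        have e2 : x n - T xb = (x n - T (x n)) + (T (x n) - T xb) := by abel
        calc ‖x n - T xb‖ ≤ ‖x n - T (x n)‖ + ‖T (x n) - T xb‖ := by
              rw [e2]; exact norm_add_le _ _
          _ ≤ ‖T (x n) - x n‖ + ‖x n - xb‖ := by
              rw [norm_sub_rev (x n)]
              exact add_le_add le_rfl (hT (x n) xb)
      have hsq : ‖x n - T xb‖^2 ≤ (‖T (x n) - x n‖ + ‖x n - xb‖)^2 :=
        pow_le_pow_left₀ (norm_nonneg _) htri 2
      have hxbd : ‖x n - xb‖ ≤ R + ‖xb‖ := by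
        calc ‖x n - xb‖ ≤ ‖x n‖ + ‖xb‖ := norm_sub_le _ _
          _ ≤ R + ‖xb‖ := by have := hbnd n; linarith
      have hip : ⟪x n - xb, c⟫ = ⟪x n, c⟫ - ⟪xb, c⟫ := by
        rw [inner_sub_left]
      nlinarith [norm_nonneg (T (x n) - x n), norm_nonneg (x n - xb),
        mul_le_mul_of_nonneg_left hxbd (mul_nonneg (by norm_num : (0:ℝ) ≤ 2) (norm_nonneg (T (x n) - x n)))]
    have hrhs : Tendsto (fun n => (‖T (x n) - x n‖^2 + 2*‖T (x n) - x n‖*(R + ‖xb‖))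
        - 2*(⟪x n, c⟫ - ⟪xb, c⟫)) ↑U (𝓝 0) := by
      have h1 : Tendsto (fun n => ‖T (x n) - x n‖) ↑U (𝓝 0) := hTxx.mono_left hU
      have h2 : Tendsto (fun n => ⟪x n, c⟫ - ⟪xb, c⟫) ↑U (𝓝 0) := by
        have := (hxb c).sub (tendsto_const_nhds (x := ⟪xb, c⟫))
        simpa using this
      have h3 := ((h1.pow 2).add ((h1.const_mul 2).mul_const (R + ‖xb‖))).sub (h2.const_mul 2)
      norm_num at h3
      convert h3 using 2 <;> ring
    have hc0 : ‖c‖^2 ≤ 0 := ge_of_tendsto hrhs (Eventually.of_forall keyd)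
    have : c = 0 := by
      have := norm_nonneg c
      have hcc : ‖c‖ = 0 := by nlinarith
      exact norm_eq_zero.mp hcc
    rw [hc_def] at this
    have := sub_eq_zero.mp this
    exact this.symm
  -- construct the weak limit
  obtain ⟨xb, hxb⟩ := weak_limit_along x R hbnd (Ultrafilter.of atTop)
  have hU0le : ↑(Ultrafilter.of (atTop : Filter ℕ)) ≤ (atTop : Filter ℕ) := Ultrafilter.of_le _
  have hfixb : T xb = xb := hdemi _ hU0le xb hxb
  refine ⟨xb, hfixb, fun w => ?_⟩
  rw [tendsto_iff_ultrafilter]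
  intro U hU
  obtain ⟨xb', hxb'⟩ := weak_limit_along x R hbnd U
  have hfixb' : T xb' = xb' := hdemi U hU xb' hxb'
  -- Opial uniqueness: xb' = xb
  have heq : xb' = xb := by
    obtain ⟨La, hLa⟩ := hL xb hfixb
    obtain ⟨Lb, hLb⟩ := hL xb' hfixb'
    have hiden : ∀ n, ‖x n - xb'‖^2 =
        ‖x n - xb‖^2 + 2*⟪x n - xb, xb - xb'⟫ + ‖xb - xb'‖^2 := by
      intro n
      have e : x n - xb' = (x n - xb) + (xb - xb') := by abel
      rw [e, norm_add_sq_real]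
    have hinner : ∀ n, ⟪x n - xb, xb - xb'⟫ = ⟪x n, xb - xb'⟫ - ⟪xb, xb - xb'⟫ := by
      intro n; rw [inner_sub_left]
    -- along U0
    have hA : Tendsto (fun n => ⟪x n - xb, xb - xb'⟫) ↑(Ultrafilter.of (atTop : Filter ℕ)) (𝓝 0) := by
      have := (hxb (xb - xb')).sub (tendsto_const_nhds (x := ⟪xb, xb - xb'⟫))
      rw [sub_self] at this
      exact (this.congr fun n => (hinner n).symm)
    have hB : Tendsto (fun n => ⟪x n - xb, xb - xb'⟫) ↑U (𝓝 (-‖xb - xb'‖^2)) := by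
      have h1 := (hxb' (xb - xb')).sub (tendsto_const_nhds (x := ⟪xb, xb - xb'⟫))
      have e : ⟪xb', xb - xb'⟫ - ⟪xb, xb - xb'⟫ = -‖xb - xb'‖^2 := by
        rw [← inner_sub_left, ← neg_sub xb xb', inner_neg_left, real_inner_self_eq_norm_sq]
      rw [e] at h1
      exact h1.congr fun n => (hinner n).symm
    have hLb1 : Lb = La + 2*0 + ‖xb - xb'‖^2 := by
      refine tendsto_nhds_unique (hLb.mono_left hU0le) ?_
      have := ((hLa.mono_left hU0le).add ((hA.const_mul 2))).add
        (tendsto_const_nhds (x := ‖xb - xb'‖^2))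
      exact (this.congr fun n => (hiden n).symm)
    have hLb2 : Lb = La + 2*(-‖xb - xb'‖^2) + ‖xb - xb'‖^2 := by
      refine tendsto_nhds_unique (hLb.mono_left hU) ?_
      have := ((hLa.mono_left hU).add ((hB.const_mul 2))).add
        (tendsto_const_nhds (x := ‖xb - xb'‖^2))
      exact (this.congr fun n => (hiden n).symm)
    have hz2 : ‖xb - xb'‖^2 = 0 := by linarith
    have : xb - xb' = 0 := by
      have h := norm_nonneg (xb - xb')
      have : ‖xb - xb'‖ = 0 := by nlinarith
      exact norm_eq_zero.mp this
    have := sub_eq_zero.mp this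
    exact this.symm
  rw [← heq]
  exact hxb' w
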